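/- Let n, f, d be positive natural numbers, let X̃₁, X̃₂ ∈ ℝ^{n×f} and W ∈ ℝ^{f×d}, and set Z¹ = X̃₁ W and Z² = X̃₂ W. Assume every column Z¹_{:i} and Z²_{:i} (1 ≤ i ≤ d) is nonzero. Define the cross-correlation matrix M ∈ ℝ^{d×d} by M_{ij} = ⟨Z¹_{:i}, Z²_{:j}⟩ / (‖Z¹_{:i}‖₂ · ‖Z²_{:j}‖₂), and for λ > 0 define the Barlow Twins loss L_BT = Σ_{i=1}^{d} (M_{ii} − 1)² + λ Σ_{i=1}^{d} Σ_{j ≠ i} (M_{ij})². If the matrix H = X̃₁ᵀ X̃₂ ∈ ℝ^{f×f} is positive semi-definite as a quadratic form (i.e., xᵀ H x ≥ 0 for every x ∈ ℝ^f), then L_BT ≤ d + λ Σ_{i=1}^{d} Σ_{j ≠ i} (M_{ij})². -/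

import Mathlib

/-! The diagonal entries of `M` are cosines of vectors with nonnegative inner product: since
`Z¹ᵀ Z² = Wᵀ H W`, the inner product of the `i`-th columns is the quadratic form of `H` at the
`i`-th column of `W`. They therefore lie in `[0, 1]`, so each `(Mᵢᵢ - 1)²` is at most `1`. -/

open Matrix BigOperators RealInnerProductSpace

/-- The `i`-th column of a real matrix, viewed as a vector in Euclidean space. -/
noncomputable def matCol {n d : ℕ} (Z : Matrix (Fin n) (Fin d) ℝ) (i : Fin d) :
    EuclideanSpace ℝ (Fin n) := WithLp.toLp 2 (fun k => Z k i)

theorem inner_matCol_matCol {n d : ℕ} (Z Z' : Matrix (Fin n) (Fin d) ℝ) (i j : Fin d) :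
    ⟪matCol Z i, matCol Z' j⟫ = (Zᵀ * Z') i j := by
  simp [matCol, PiLp.inner_apply, mul_apply, mul_comm]

theorem transpose_mul_mul_apply_self_nonneg {ι κ : Type*} [Fintype ι] [Fintype κ]
    {H : Matrix ι ι ℝ} (hH : ∀ x : ι → ℝ, 0 ≤ x ⬝ᵥ (H *ᵥ x)) (W : Matrix ι κ ℝ) (i : κ) :
    0 ≤ (Wᵀ * H * W) i i := by
  convert hH (Wᵀ i) using 1
  rw [Matrix.mul_assoc]
  simp only [mul_apply, dotProduct, mulVec, transpose_apply]

theorem sq_real_inner_div_norm_mul_norm_sub_one_le_one {E : Type*} [NormedAddCommGroup E]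
    [InnerProductSpace ℝ E] {x y : E} (h : 0 ≤ ⟪x, y⟫) :
    (⟪x, y⟫ / (‖x‖ * ‖y‖) - 1) ^ 2 ≤ 1 := by
  have hnonneg : 0 ≤ ⟪x, y⟫ / (‖x‖ * ‖y‖) := by positivity
  have hle : ⟪x, y⟫ / (‖x‖ * ‖y‖) ≤ 1 :=
    (le_abs_self _).trans (abs_real_inner_div_norm_mul_norm_le_one x y)
  nlinarith

theorem barlow_twins_upper_bound_general
    (n f d : ℕ)
    (X1 X2 : Matrix (Fin n) (Fin f) ℝ) (W : Matrix (Fin f) (Fin d) ℝ)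
    (lam : ℝ)
    (Z1 Z2 : Matrix (Fin n) (Fin d) ℝ)
    (hZ1 : Z1 = X1 * W) (hZ2 : Z2 = X2 * W)
    (M : Matrix (Fin d) (Fin d) ℝ)
    (hM : ∀ i j, M i j = ⟪matCol Z1 i, matCol Z2 j⟫ / (‖matCol Z1 i‖ * ‖matCol Z2 j‖))
    (hH : ∀ x : Fin f → ℝ, 0 ≤ x ⬝ᵥ ((X1ᵀ * X2) *ᵥ x)) :
    (∑ i, (M i i - 1) ^ 2) + lam * ∑ i, ∑ j ∈ Finset.univ.erase i, (M i j) ^ 2 ≤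
      (d : ℝ) + lam * ∑ i, ∑ j ∈ Finset.univ.erase i, (M i j) ^ 2 := by
  have hgram : Z1ᵀ * Z2 = Wᵀ * (X1ᵀ * X2) * W := by
    rw [hZ1, hZ2, transpose_mul, Matrix.mul_assoc, Matrix.mul_assoc, Matrix.mul_assoc]
  have hdiag : ∀ i, (M i i - 1) ^ 2 ≤ 1 := fun i => by
    rw [hM]
    apply sq_real_inner_div_norm_mul_norm_sub_one_le_one
    rw [inner_matCol_matCol, hgram]
    exact transpose_mul_mul_apply_self_nonneg hH W i
  have hsum : ∑ i, (M i i - 1) ^ 2 ≤ (d : ℝ) := by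
    simpa using Finset.sum_le_card_nsmul Finset.univ _ 1 fun i _ => hdiag i
  linarith

/-- **Proposition 2 (Barlow Twins upper bound).** If the inner product
`H = X̃₁ᵀ X̃₂` of the two inputs is positive semi-definite as a quadratic form,
then the Barlow Twins loss is bounded above by
`d + λ ∑ i ∑ j ≠ i, (Mᵢⱼ)²`. -/
theorem barlow_twins_upper_bound
    (n f d : ℕ) (hn : 0 < n) (hf : 0 < f) (hd : 0 < d)
    (X1 X2 : Matrix (Fin n) (Fin f) ℝ) (W : Matrix (Fin f) (Fin d) ℝ)
    (lam : ℝ) (hlam : 0 < lam)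
    (Z1 Z2 : Matrix (Fin n) (Fin d) ℝ)
    (hZ1 : Z1 = X1 * W) (hZ2 : Z2 = X2 * W)
    (hcol1 : ∀ i, matCol Z1 i ≠ 0) (hcol2 : ∀ i, matCol Z2 i ≠ 0)
    (M : Matrix (Fin d) (Fin d) ℝ)
    (hM : ∀ i j, M i j = ⟪matCol Z1 i, matCol Z2 j⟫ / (‖matCol Z1 i‖ * ‖matCol Z2 j‖))
    (hH : ∀ x : Fin f → ℝ, 0 ≤ x ⬝ᵥ ((X1ᵀ * X2) *ᵥ x)) :
    (∑ i, (M i i - 1) ^ 2) + lam * ∑ i, ∑ j ∈ Finset.univ.erase i, (M i j) ^ 2 ≤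
      (d : ℝ) + lam * ∑ i, ∑ j ∈ Finset.univ.erase i, (M i j) ^ 2 :=
  barlow_twins_upper_bound_general n f d X1 X2 W lam Z1 Z2 hZ1 hZ2 M hM hH
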